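/- arXiv:1308.6591 — 2 statements merged into one kernel-verified Lean document; each statement's English description precedes it below -/
import Mathlib

section
/- Let V be a 2-dimensional real inner product space with orientation and j rotation by π/2. For a linear endomorphism β of V with adjoint β*, the following are equivalent: (i) jβ = βj; (ii) β* + β = c·Id for some real c. Moreover in that case c = trace(β). -/
/-!
In dimension two every skew-adjoint `j` satisfies `β* j + j β = (tr β) j`: in an orthonormal
basis `j` is a multiple of the rotation `J`, and for `J` this is the adjugate formula
`J⁻¹ Aᵀ J = adj A = tr A - A`. Hence `(β* + β - tr β) j = β j - j β`, and as `j` is invertible,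
`β` commutes with `j` exactly when `β* + β = tr β`. Taking traces of `β* + β = c` gives
`2 c = 2 tr β`.
-/

open RealInnerProductSpace LinearMap Module Matrix

theorem Matrix.transpose_mul_add_mul_eq_trace_smul_of_transpose_eq_neg {R : Type*} [CommRing R]
    [IsAddTorsionFree R] (A J : Matrix (Fin 2) (Fin 2) R) (hJ : Jᵀ = -J) :
    Aᵀ * J + J * A = A.trace • J := by
  have h00 : J 0 0 = 0 := self_eq_neg.mp (congrFun₂ hJ 0 0)
  have h11 : J 1 1 = 0 := self_eq_neg.mp (congrFun₂ hJ 1 1)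
  have h10 : J 1 0 = -J 0 1 := congrFun₂ hJ 0 1
  ext i k
  fin_cases i <;> fin_cases k <;>
    simp only [Fin.zero_eta, Fin.mk_one, Fin.isValue, Matrix.add_apply, mul_apply, transpose_apply,
      Fin.sum_univ_two, trace_fin_two, Matrix.smul_apply, smul_eq_mul, h00, h11, h10] <;> ring

theorem LinearMap.trace_adjoint {𝕜 E : Type*} [RCLike 𝕜] [NormedAddCommGroup E]
    [InnerProductSpace 𝕜 E] [FiniteDimensional 𝕜 E] (T : E →ₗ[𝕜] E) :
    trace 𝕜 E (adjoint T) = star (trace 𝕜 E T) := by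
  let b := (stdOrthonormalBasis 𝕜 E).toBasis
  rw [trace_eq_matrix_trace 𝕜 b, trace_eq_matrix_trace 𝕜 b, toMatrix_adjoint, trace_conjTranspose]

theorem LinearMap.adjoint_eq_neg_of_inner_map_self_eq_zero {𝕜 E : Type*} [RCLike 𝕜]
    [NormedAddCommGroup E] [InnerProductSpace 𝕜 E] [FiniteDimensional 𝕜 E] {T : E →ₗ[𝕜] E}
    (hT : ∀ x, inner 𝕜 (T x) x = 0) : adjoint T = -T := by
  have hsymm : (adjoint T + T).IsSymmetric := by
    rw [isSymmetric_iff_isSelfAdjoint, IsSelfAdjoint, star_eq_adjoint, map_add, adjoint_adjoint,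
      add_comm]
  rw [← add_eq_zero_iff_eq_neg, ← hsymm.inner_map_self_eq_zero]
  intro x
  rw [add_apply, inner_add_left, adjoint_inner_left, hT, add_zero, inner_eq_zero_symm]
  exact hT x

theorem LinearMap.adjoint_comp_add_comp_eq_trace_smul {V : Type*} [NormedAddCommGroup V]
    [InnerProductSpace ℝ V] [FiniteDimensional ℝ V] (h2 : finrank ℝ V = 2) {j : V →ₗ[ℝ] V}
    (hj : adjoint j = -j) (β : V →ₗ[ℝ] V) :
    adjoint β ∘ₗ j + j ∘ₗ β = trace ℝ V β • j := by
  let b := (stdOrthonormalBasis ℝ V).reindex (finCongr h2)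
  apply EquivLike.injective (toMatrixOrthonormal b)
  have hJ : (toMatrixOrthonormal b j)ᵀ = -toMatrixOrthonormal b j := by
    rw [← conjTranspose_eq_transpose_of_trivial, ← star_eq_conjTranspose, ← map_star,
      star_eq_adjoint, hj, map_neg]
  rw [← Module.End.mul_eq_comp, ← Module.End.mul_eq_comp, map_add, map_mul, map_mul, map_smul,
    ← star_eq_adjoint, map_star, star_eq_conjTranspose, conjTranspose_eq_transpose_of_trivial,
    trace_eq_matrix_trace ℝ b.toBasis]
  exact transpose_mul_add_mul_eq_trace_smul_of_transpose_eq_neg _ _ hJ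

theorem LinearMap.comp_eq_zero_iff_of_comp_self_eq_neg_id {R M : Type*} [Ring R]
    [AddCommGroup M] [Module R M] {j : M →ₗ[R] M} (hj2 : j ∘ₗ j = -LinearMap.id) (f : M →ₗ[R] M) :
    f ∘ₗ j = 0 ↔ f = 0 := by
  refine ⟨fun h => ?_, fun h => by rw [h, zero_comp]⟩
  simpa [comp_assoc, hj2] using congrArg (· ∘ₗ j) h

theorem commutes_iff_adjoint_add_self_smul_id_general {V : Type*} [NormedAddCommGroup V]
    [InnerProductSpace ℝ V] [FiniteDimensional ℝ V]
    (h2 : Module.finrank ℝ V = 2) (j : V →ₗ[ℝ] V)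
    (hj2 : j ∘ₗ j = -LinearMap.id)
    (hjorth : ∀ u : V, ⟪j u, u⟫ = 0)
    (β : V →ₗ[ℝ] V) :
    (j ∘ₗ β = β ∘ₗ j ↔ ∃ c : ℝ, LinearMap.adjoint β + β = c • LinearMap.id) ∧
      ∀ c : ℝ, LinearMap.adjoint β + β = c • LinearMap.id →
        c = LinearMap.trace ℝ V β := by
  have htrace (c : ℝ) (hc : adjoint β + β = c • LinearMap.id) : c = trace ℝ V β := by
    have h := congrArg (trace ℝ V) hc
    rw [map_add, trace_adjoint, map_smul, trace_id, h2] at h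
    simp only [star_trivial, smul_eq_mul, Nat.cast_ofNat] at h
    linarith
  have hcomm : (adjoint β + β - trace ℝ V β • LinearMap.id) ∘ₗ j = β ∘ₗ j - j ∘ₗ β := by
    rw [sub_comp, add_comp, smul_comp, id_comp,
      ← adjoint_comp_add_comp_eq_trace_smul h2 (adjoint_eq_neg_of_inner_map_self_eq_zero hjorth) β]
    abel
  refine ⟨?_, htrace⟩
  calc j ∘ₗ β = β ∘ₗ j ↔ adjoint β + β - trace ℝ V β • LinearMap.id = 0 := by
        rw [← comp_eq_zero_iff_of_comp_self_eq_neg_id hj2, hcomm, sub_eq_zero, eq_comm]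
    _ ↔ ∃ c : ℝ, adjoint β + β = c • LinearMap.id :=
        ⟨fun h => ⟨_, sub_eq_zero.mp h⟩, fun ⟨c, hc⟩ => sub_eq_zero.mpr (htrace c hc ▸ hc)⟩

/-- for an endomorphism `β` of an oriented 2-dimensional real
inner product space with rotation `j` by `π/2`, `jβ = βj` iff
`β* + β = c·Id` for some real `c`; moreover in that case `c = trace β`. -/
theorem commutes_iff_adjoint_add_self_smul_id {V : Type*} [NormedAddCommGroup V]
    [InnerProductSpace ℝ V] [FiniteDimensional ℝ V]
    (h2 : Module.finrank ℝ V = 2) (j : V →ₗ[ℝ] V)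
    (hj2 : j ∘ₗ j = -LinearMap.id)
    (hjiso : ∀ u : V, ⟪j u, j u⟫ = ⟪u, u⟫)
    (hjorth : ∀ u : V, ⟪j u, u⟫ = 0)
    (β : V →ₗ[ℝ] V) :
    (j ∘ₗ β = β ∘ₗ j ↔ ∃ c : ℝ, LinearMap.adjoint β + β = c • LinearMap.id) ∧
      ∀ c : ℝ, LinearMap.adjoint β + β = c • LinearMap.id →
        c = LinearMap.trace ℝ V β :=
  commutes_iff_adjoint_add_self_smul_id_general h2 j hj2 hjorth β
end

section
/- Let W be a 3-dimensional real inner product space and suppose for each unit vector v ∈ W the symmetric endomorphism R_v of v^⊥ satisfies R_v = a(v)·Id for some scalar a(v), where R_v(u) = R(v,u)v for an algebraic curvature tensor R on W. Then the sectional curvature K(σ) = ⟨R(v,u)v, u⟩ (for {v,u} an orthonormal basis of the 2-plane σ) takes the same value on all 2-planes σ ⊆ W. -/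
/-!
The hypothesis says that `a(v)` is the sectional curvature of every plane containing the unit
vector `v`. Since `⟪R(v,w)v, w⟫ = ⟪R(w,v)w, v⟫` by the symmetries of `R`, the plane spanned by
orthonormal `v, w` gives `a(v) = a(w)`. In dimension 3 any two unit vectors `v, v'` have a
common unit normal `w`, whence `a(v) = a(w) = a(v')`.
-/

open RealInnerProductSpace Module

theorem Submodule.exists_norm_eq_one_mem_orthogonal {𝕜 E : Type*} [RCLike 𝕜]
    [NormedAddCommGroup E] [InnerProductSpace 𝕜 E] [FiniteDimensional 𝕜 E]
    {K : Submodule 𝕜 E} (hK : finrank 𝕜 K < finrank 𝕜 E) : ∃ w ∈ Kᗮ, ‖w‖ = 1 := by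
  have hK_ne_top : K ≠ ⊤ := fun h => by rw [h, finrank_top] at hK; exact lt_irrefl _ hK
  obtain ⟨x, hxK, hx0⟩ := exists_mem_ne_zero_of_ne_bot (mt K.orthogonal_eq_bot_iff.mp hK_ne_top)
  exact ⟨(‖x‖⁻¹ : 𝕜) • x, Kᗮ.smul_mem _ hxK, norm_smul_inv_norm hx0⟩

theorem exists_norm_eq_one_forall_inner_eq_zero {𝕜 E : Type*} [RCLike 𝕜]
    [NormedAddCommGroup E] [InnerProductSpace 𝕜 E] {s : Finset E}
    (hs : s.card < finrank 𝕜 E) : ∃ w : E, ‖w‖ = 1 ∧ ∀ x ∈ s, inner 𝕜 x w = 0 := by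
  have : FiniteDimensional 𝕜 E := Module.finite_of_finrank_pos (by omega)
  have hspan : finrank 𝕜 (Submodule.span 𝕜 (s : Set E)) < finrank 𝕜 E :=
    (finrank_span_finset_le_card s).trans_lt hs
  obtain ⟨w, hw, hw1⟩ := Submodule.exists_norm_eq_one_mem_orthogonal hspan
  exact ⟨w, hw1, fun x hx => hw x (Submodule.subset_span hx)⟩

section Curvature

variable {W : Type*} [NormedAddCommGroup W] [InnerProductSpace ℝ W]
  (Rc : W →ₗ[ℝ] W →ₗ[ℝ] W →ₗ[ℝ] W)

theorem inner_curv_eq_of_forall_eq_smul {v : W} {a : ℝ}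
    (ha : ∀ u : W, ⟪u, v⟫ = 0 → Rc v u v = a • u) {u : W} (hu : ‖u‖ = 1) (huv : ⟪v, u⟫ = 0) :
    ⟪Rc v u v, u⟫ = a := by
  rw [ha u (real_inner_comm u v ▸ huv), real_inner_smul_left, real_inner_self_eq_norm_sq, hu]
  ring

theorem inner_curv_comm (hanti : ∀ x y z : W, Rc x y z = -Rc y x z)
    (hskew : ∀ x y z w : W, ⟪Rc x y z, w⟫ = -⟪Rc x y w, z⟫) (v u : W) :
    ⟪Rc v u v, u⟫ = ⟪Rc u v u, v⟫ := by
  rw [hanti u v u, inner_neg_left, hskew v u u v, neg_neg]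

end Curvature

theorem sectional_curvature_constant_general {W : Type*} [NormedAddCommGroup W]
    [InnerProductSpace ℝ W]
    (h3 : Module.finrank ℝ W = 3)
    (Rc : W →ₗ[ℝ] W →ₗ[ℝ] W →ₗ[ℝ] W)
    (hanti : ∀ x y z : W, Rc x y z = -Rc y x z)
    (hskew : ∀ x y z w : W, ⟪Rc x y z, w⟫ = -⟪Rc x y w, z⟫)
    (hiso : ∀ v : W, ‖v‖ = 1 → ∃ a : ℝ, ∀ u : W, ⟪u, v⟫ = 0 → Rc v u v = a • u) :
    ∀ v u v' u' : W, ‖v‖ = 1 → ‖u‖ = 1 → ⟪v, u⟫ = 0 →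
      ‖v'‖ = 1 → ‖u'‖ = 1 → ⟪v', u'⟫ = 0 →
      ⟪Rc v u v, u⟫ = ⟪Rc v' u' v', u'⟫ := by
  classical
  intro v u v' u' hv hu hvu hv' hu' hvu'
  obtain ⟨w, hw, hvw, hv'w⟩ : ∃ w : W, ‖w‖ = 1 ∧ ⟪v, w⟫ = 0 ∧ ⟪v', w⟫ = 0 := by
    obtain ⟨w, hw, horth⟩ := exists_norm_eq_one_forall_inner_eq_zero (𝕜 := ℝ) (s := {v, v'})
      (by rw [h3]; exact (Finset.card_le_two).trans_lt (by norm_num))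
    exact ⟨w, hw, horth v (by simp), horth v' (by simp)⟩
  obtain ⟨a, ha⟩ := hiso v hv
  obtain ⟨b, hb⟩ := hiso w hw
  obtain ⟨c, hc⟩ := hiso v' hv'
  calc ⟪Rc v u v, u⟫ = a := inner_curv_eq_of_forall_eq_smul Rc ha hu hvu
    _ = ⟪Rc w v w, v⟫ := by
      rw [← inner_curv_comm Rc hanti hskew, inner_curv_eq_of_forall_eq_smul Rc ha hw hvw]
    _ = ⟪Rc w v' w, v'⟫ := by
      rw [inner_curv_eq_of_forall_eq_smul Rc hb hv (real_inner_comm v w ▸ hvw),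
        inner_curv_eq_of_forall_eq_smul Rc hb hv' (real_inner_comm v' w ▸ hv'w)]
    _ = c := by
      rw [← inner_curv_comm Rc hanti hskew, inner_curv_eq_of_forall_eq_smul Rc hc hw hv'w]
    _ = ⟪Rc v' u' v', u'⟫ := (inner_curv_eq_of_forall_eq_smul Rc hc hu' hvu').symm

/-- let `W` be a 3-dimensional real inner product space and `Rc`
an algebraic curvature tensor on `W` (with the usual symmetries).  If for each
unit vector `v` the endomorphism `u ↦ R(v,u)v` of `v^⊥` is a scalar `a(v)`
times the identity, then the sectional curvature `⟪R(v,u)v, u⟫` takes the same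
value on all 2-planes, i.e. it is the same for all orthonormal pairs `(v,u)`. -/
theorem sectional_curvature_constant {W : Type*} [NormedAddCommGroup W]
    [InnerProductSpace ℝ W] [FiniteDimensional ℝ W]
    (h3 : Module.finrank ℝ W = 3)
    (Rc : W →ₗ[ℝ] W →ₗ[ℝ] W →ₗ[ℝ] W)
    (hanti : ∀ x y z : W, Rc x y z = -Rc y x z)
    (hskew : ∀ x y z w : W, ⟪Rc x y z, w⟫ = -⟪Rc x y w, z⟫)
    (hpair : ∀ x y z w : W, ⟪Rc x y z, w⟫ = ⟪Rc z w x, y⟫)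
    (hbianchi : ∀ x y z : W, Rc x y z + Rc y z x + Rc z x y = 0)
    (hiso : ∀ v : W, ‖v‖ = 1 → ∃ a : ℝ, ∀ u : W, ⟪u, v⟫ = 0 → Rc v u v = a • u) :
    ∀ v u v' u' : W, ‖v‖ = 1 → ‖u‖ = 1 → ⟪v, u⟫ = 0 →
      ‖v'‖ = 1 → ‖u'‖ = 1 → ⟪v', u'⟫ = 0 →
      ⟪Rc v u v, u⟫ = ⟪Rc v' u' v', u'⟫ :=
  sectional_curvature_constant_general h3 Rc hanti hskew hiso
end
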